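/- arXiv:hep-th/9911214 — 2 statements merged into one kernel-verified Lean document; each statement's English description precedes it below -/
import Mathlib

section
/- If the chronological products satisfy the causality axiom, then the antichronological products factorize in the reversed order: T̄(S₁ ∪ S₂) = T̄(S₂)·T̄(S₁) for all disjoint S₁, S₂ ⊆ I with x(S₁) ≥ x(S₂) (i.e. x_i − x_j ∉ V̄⁻ for all i ∈ S₁, j ∈ S₂). -/
/-!
Up to the sign `(-1)^|X|`, `T̄` is `opSum T`, the right inverse of `T` for the convolution
`(f ⋆ g) X = ∑_{Y ⊆ X} f Y * g (X \ Y)` of set functions; since `T ∅ = 1`, a right inverse is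
determined recursively, hence unique below any `N`. Causality makes `T` multiplicative across
`S₁, S₂`, i.e. `T Y = T (Y ∩ S₁) * T (Y ∩ S₂)`. Then `Z ↦ opSum T (Z ∩ S₂) * opSum T (Z ∩ S₁)` is
a right inverse of `T` below `S₁ ∪ S₂`: writing `Xᵢ = X ∩ Sᵢ`, in the summand
`T Y₁ * T Y₂ * opSum T (X₂ \ Y₂) * opSum T (X₁ \ Y₁)` the reversed order puts the
`S₂`-factors next to each other, so the sum over `Y₂` collapses first and then the sum over `Y₁`.
Uniqueness gives `opSum T (S₁ ∪ S₂) = opSum T S₂ * opSum T S₁`.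
-/

/-- The Minkowski quadratic form on `ℝ⁴`. -/
def minkQ (x : Fin 4 → ℝ) : ℝ := x 0 ^ 2 - x 1 ^ 2 - x 2 ^ 2 - x 3 ^ 2

/-- The open backward light cone `V⁻`. -/
def Vminus : Set (Fin 4 → ℝ) := {x | 0 < minkQ x ∧ x 0 < 0}

/-- Sum over all ordered partitions of `X` into `r ≥ 1` nonempty pairwise disjoint blocks
`X₁, …, X_r` of `(-1)^r * T X₁ * ⋯ * T X_r` (with value `1` for `X = ∅`), computed by peeling
off the first block. -/
def opSum {A : Type*} [Ring A] {ι : Type*} [DecidableEq ι]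
    (T : Finset ι → A) (X : Finset ι) : A :=
  if _hX : X = ∅ then 1
  else
    ∑ Y ∈ (X.powerset.filter (fun Y => Y ≠ ∅)).attach,
      (-1 : A) * T Y.1 * opSum T (X \ Y.1)
termination_by X.card
decreasing_by
  have hY := Y.2
  simp only [Finset.mem_filter, Finset.mem_powerset] at hY
  have h1 : Y.1.card ≤ X.card := Finset.card_le_card hY.1
  have h2 : 0 < Y.1.card := Finset.card_pos.mpr (Finset.nonempty_iff_ne_empty.mpr hY.2)
  rw [Finset.card_sdiff, Finset.inter_eq_left.mpr hY.1]
  omega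

/-- The antichronological products `T̄`, defined by `T̄(∅) = 1` and
`(−1)^{|X|} T̄(X) = Σ_{r=1}^{|X|} (−1)^r Σ T(X₁)⋯T(X_r)`, the inner sum running over all ordered
partitions of `X` into `r` nonempty pairwise disjoint subsets. -/
def chronoBar {A : Type*} [Ring A] {ι : Type*} [DecidableEq ι]
    (T : Finset ι → A) (X : Finset ι) : A :=
  (-1 : A) ^ X.card * opSum T X

section FinsetSplitting

variable {ι : Type*} [DecidableEq ι] {S₁ S₂ : Finset ι}

theorem inter_union_inter_of_subset_union {X : Finset ι} (hX : X ⊆ S₁ ∪ S₂) :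
    X ∩ S₁ ∪ X ∩ S₂ = X := by
  rw [← Finset.inter_union_distrib_left, Finset.inter_eq_left.mpr hX]

theorem sum_powerset_of_subset_union {M : Type*} [AddCommMonoid M] (hd : Disjoint S₁ S₂)
    {X : Finset ι} (hX : X ⊆ S₁ ∪ S₂) (F : Finset ι → Finset ι → M) :
    ∑ Y ∈ X.powerset, F (Y ∩ S₁) (Y ∩ S₂)
      = ∑ Y₁ ∈ (X ∩ S₁).powerset, ∑ Y₂ ∈ (X ∩ S₂).powerset, F Y₁ Y₂ := by
  rw [← Finset.sum_product']
  refine Finset.sum_nbij' (fun Y => (Y ∩ S₁, Y ∩ S₂)) (fun p => p.1 ∪ p.2) ?_ ?_ ?_ ?_ ?_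
  · intro Y hY
    simp only [Finset.mem_product, Finset.mem_powerset] at hY ⊢
    exact ⟨Finset.inter_subset_inter_right hY, Finset.inter_subset_inter_right hY⟩
  · intro p hp
    simp only [Finset.mem_product, Finset.mem_powerset] at hp ⊢
    exact Finset.union_subset (hp.1.trans Finset.inter_subset_left)
      (hp.2.trans Finset.inter_subset_left)
  · intro Y hY
    exact inter_union_inter_of_subset_union ((Finset.mem_powerset.mp hY).trans hX)
  · intro p hp
    simp only [Finset.mem_product, Finset.mem_powerset] at hp
    have h₁ : p.1 ⊆ S₁ := hp.1.trans Finset.inter_subset_right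
    have h₂ : p.2 ⊆ S₂ := hp.2.trans Finset.inter_subset_right
    refine Prod.ext ?_ ?_
    · dsimp only
      rw [Finset.union_inter_distrib_right, Finset.inter_eq_left.mpr h₁,
        Finset.disjoint_iff_inter_eq_empty.mp (hd.symm.mono_left h₂), Finset.union_empty]
    · dsimp only
      rw [Finset.union_inter_distrib_right, Finset.inter_eq_left.mpr h₂,
        Finset.disjoint_iff_inter_eq_empty.mp (hd.mono_left h₁), Finset.empty_union]
  · intro Y _
    rfl

end FinsetSplitting

section SubsetConvolution

variable {A : Type*} [Ring A] {ι : Type*} [DecidableEq ι]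

def subsetConv (f g : Finset ι → A) (X : Finset ι) : A :=
  ∑ Y ∈ X.powerset, f Y * g (X \ Y)

theorem subsetConv_eq_add_sum_erase {f : Finset ι → A} (hf : f ∅ = 1) (g : Finset ι → A)
    (X : Finset ι) :
    subsetConv f g X = g X + ∑ Y ∈ X.powerset.erase ∅, f Y * g (X \ Y) := by
  rw [subsetConv, ← Finset.add_sum_erase _ _ (Finset.empty_mem_powerset X), hf, one_mul,
    Finset.sdiff_empty]

theorem opSum_empty (T : Finset ι → A) : opSum T ∅ = 1 := by
  rw [opSum, dif_pos rfl]

theorem opSum_of_ne_empty (T : Finset ι → A) {X : Finset ι} (hX : X ≠ ∅) :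
    opSum T X = -∑ Y ∈ X.powerset.erase ∅, T Y * opSum T (X \ Y) := by
  rw [opSum, dif_neg hX, Finset.sum_attach _ fun Y => (-1 : A) * T Y * opSum T (X \ Y),
    Finset.filter_ne', ← Finset.sum_neg_distrib]
  simp only [neg_mul, one_mul]

theorem subsetConv_opSum {T : Finset ι → A} (hT : T ∅ = 1) (X : Finset ι) :
    subsetConv T (opSum T) X = if X = ∅ then 1 else 0 := by
  split_ifs with hX
  · simp [hX, subsetConv, hT, opSum_empty]
  · rw [subsetConv_eq_add_sum_erase hT, opSum_of_ne_empty T hX, neg_add_cancel]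

theorem eq_opSum_of_subsetConv {T : Finset ι → A} (hT : T ∅ = 1) {U : Finset ι → A}
    {N : Finset ι} (hU : ∀ X ⊆ N, subsetConv T U X = if X = ∅ then 1 else 0) :
    ∀ X ⊆ N, U X = opSum T X := by
  intro X
  induction X using Finset.strongInduction with
  | H X ih =>
    intro hXN
    have hsum : ∑ Y ∈ X.powerset.erase ∅, T Y * U (X \ Y)
        = ∑ Y ∈ X.powerset.erase ∅, T Y * opSum T (X \ Y) := by
      refine Finset.sum_congr rfl fun Y hY => ?_
      obtain ⟨hY, hYX⟩ := Finset.mem_erase.mp hY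
      have hlt : X \ Y ⊂ X :=
        Finset.sdiff_ssubset (Finset.mem_powerset.mp hYX) (Finset.nonempty_iff_ne_empty.mpr hY)
      rw [ih _ hlt (hlt.subset.trans hXN)]
    have h := (hU X hXN).trans (subsetConv_opSum hT X).symm
    rwa [subsetConv_eq_add_sum_erase hT, subsetConv_eq_add_sum_erase hT, hsum,
      add_left_inj] at h

section Factorization

variable {S₁ S₂ : Finset ι}

theorem subsetConv_opSum_inter_mul {T : Finset ι → A} (hT : T ∅ = 1) (hd : Disjoint S₁ S₂)
    (hmul : ∀ Y₁ ⊆ S₁, ∀ Y₂ ⊆ S₂, T (Y₁ ∪ Y₂) = T Y₁ * T Y₂) {X : Finset ι}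
    (hX : X ⊆ S₁ ∪ S₂) :
    subsetConv T (fun Z => opSum T (Z ∩ S₂) * opSum T (Z ∩ S₁)) X
      = if X = ∅ then 1 else 0 := by
  have hsplit : subsetConv T (fun Z => opSum T (Z ∩ S₂) * opSum T (Z ∩ S₁)) X
      = ∑ Y₁ ∈ (X ∩ S₁).powerset,
          T Y₁ * subsetConv T (opSum T) (X ∩ S₂) * opSum T ((X ∩ S₁) \ Y₁) := by
    unfold subsetConv
    simp only [Finset.mul_sum, Finset.sum_mul]
    rw [← sum_powerset_of_subset_union hd hX fun Y₁ Y₂ =>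
      T Y₁ * (T Y₂ * opSum T ((X ∩ S₂) \ Y₂)) * opSum T ((X ∩ S₁) \ Y₁)]
    refine Finset.sum_congr rfl fun Y hY => ?_
    have hYS : Y ∩ S₁ ∪ Y ∩ S₂ = Y :=
      inter_union_inter_of_subset_union ((Finset.mem_powerset.mp hY).trans hX)
    have hdist : ∀ S : Finset ι, (X \ Y) ∩ S = (X ∩ S) \ (Y ∩ S) :=
      inf_sdiff_distrib_right X Y
    rw [hdist, hdist, ← mul_assoc, ← mul_assoc,
      ← hmul _ Finset.inter_subset_right _ Finset.inter_subset_right, hYS, mul_assoc]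
  rw [hsplit, subsetConv_opSum hT]
  by_cases hX₂ : X ∩ S₂ = ∅
  · have hX₁ : X ∩ S₁ = X := by
      rw [← inter_union_inter_of_subset_union hX, hX₂, Finset.union_empty, Finset.inter_assoc,
        Finset.inter_self]
    simp only [hX₂, if_true, mul_one]
    rw [← subsetConv, hX₁, subsetConv_opSum hT]
  · have hX : X ≠ ∅ := fun h => hX₂ (by rw [h, Finset.empty_inter])
    simp only [hX₂, hX, if_false, mul_zero, zero_mul, Finset.sum_const_zero]

theorem opSum_union_of_mul {T : Finset ι → A} (hT : T ∅ = 1) (hd : Disjoint S₁ S₂)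
    (hmul : ∀ Y₁ ⊆ S₁, ∀ Y₂ ⊆ S₂, T (Y₁ ∪ Y₂) = T Y₁ * T Y₂) :
    opSum T (S₁ ∪ S₂) = opSum T S₂ * opSum T S₁ := by
  have h := eq_opSum_of_subsetConv hT (fun X hX => subsetConv_opSum_inter_mul hT hd hmul hX)
    (S₁ ∪ S₂) subset_rfl
  rwa [Finset.union_inter_cancel_right, Finset.union_inter_cancel_left, eq_comm] at h

theorem chronoBar_union_of_mul {T : Finset ι → A} (hT : T ∅ = 1) (hd : Disjoint S₁ S₂)
    (hmul : ∀ Y₁ ⊆ S₁, ∀ Y₂ ⊆ S₂, T (Y₁ ∪ Y₂) = T Y₁ * T Y₂) :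
    chronoBar T (S₁ ∪ S₂) = chronoBar T S₂ * chronoBar T S₁ := by
  have hcomm (a : A) : Commute ((-1 : A) ^ S₁.card) a := (Commute.neg_one_left a).pow_left _
  rw [chronoBar, chronoBar, chronoBar, opSum_union_of_mul hT hd hmul,
    Finset.card_union_of_disjoint hd, pow_add, mul_assoc, (hcomm _).left_comm,
    (hcomm _).left_comm, mul_assoc]

end Factorization

end SubsetConvolution

theorem antichrono_reverse_causality_general {A : Type*} [Ring A] {ι : Type*} [DecidableEq ι]
    (x : ι → Fin 4 → ℝ) (T : Finset ι → A) (hT1 : T ∅ = 1)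
    (hcaus : ∀ S₁ S₂ : Finset ι, Disjoint S₁ S₂ →
      (∀ i ∈ S₁, ∀ j ∈ S₂, x i - x j ∉ closure Vminus) → T (S₁ ∪ S₂) = T S₁ * T S₂)
    (S₁ S₂ : Finset ι) (hd : Disjoint S₁ S₂)
    (hx : ∀ i ∈ S₁, ∀ j ∈ S₂, x i - x j ∉ closure Vminus) :
    chronoBar T (S₁ ∪ S₂) = chronoBar T S₂ * chronoBar T S₁ :=
  chronoBar_union_of_mul hT1 hd fun Y₁ h₁ Y₂ h₂ =>
    hcaus Y₁ Y₂ (hd.mono h₁ h₂) fun i hi j hj => hx i (h₁ hi) j (h₂ hj)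

/-- If the chronological products satisfy the causality axiom, then the antichronological
products factorize in the reversed order: `T̄(S₁ ∪ S₂) = T̄(S₂)·T̄(S₁)` whenever `S₁, S₂` are
disjoint and `x(S₁) ≥ x(S₂)`. -/
theorem antichrono_reverse_causality {A : Type*} [Ring A] {ι : Type*} [Fintype ι] [DecidableEq ι]
    (x : ι → Fin 4 → ℝ) (T : Finset ι → A) (hT1 : T ∅ = 1)
    (hcaus : ∀ S₁ S₂ : Finset ι, Disjoint S₁ S₂ →
      (∀ i ∈ S₁, ∀ j ∈ S₂, x i - x j ∉ closure Vminus) → T (S₁ ∪ S₂) = T S₁ * T S₂)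
    (S₁ S₂ : Finset ι) (hd : Disjoint S₁ S₂)
    (hx : ∀ i ∈ S₁, ∀ j ∈ S₂, x i - x j ∉ closure Vminus) :
    chronoBar T (S₁ ∪ S₂) = chronoBar T S₂ * chronoBar T S₁ :=
  antichrono_reverse_causality_general x T hT1 hcaus S₁ S₂ hd hx
end

section
/- Assume the gauge-invariance identity [Q, T(S)] = i Σ_{l∈S} Σ_{μ=0}^{3} ∂T^μ_l(S)/∂x_l^μ holds for every proper subset S ⊊ {1,…,n}. Then pointwise on (ℝ⁴)ⁿ: [Q, A′_n] = i Σ_{l=1}^{n} Σ_{μ=0}^{3} ∂A′^μ_{n,l}/∂x_l^μ and [Q, R′_n] = i Σ_{l=1}^{n} Σ_{μ=0}^{3} ∂R′^μ_{n,l}/∂x_l^μ; consequently D_n := A′_n − R′_n satisfies [Q, D_n] = i Σ_{l=1}^{n} Σ_{μ=0}^{3} ∂D^μ_{n,l}/∂x_l^μ with D^μ_{n,l} := A′^μ_{n,l} − R′^μ_{n,l}. -/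
/-- Sum over all ordered partitions of `X` into `r ≥ 1` nonempty pairwise disjoint blocks of
`(-1)^r * T X₁ ⋯ T' X_k ⋯ T X_r`, with `T'` replacing `T` in exactly one block (value `0` for
`X = ∅`), computed by peeling off the first block. -/
def opSumD {A : Type*} [Ring A] {ι : Type*} [DecidableEq ι]
    (T T' : Finset ι → A) (X : Finset ι) : A :=
  if _hX : X = ∅ then 0
  else
    ∑ Y ∈ (X.powerset.filter (fun Y => Y ≠ ∅)).attach,
      (-1 : A) * (T' Y.1 * opSum T (X \ Y.1) + T Y.1 * opSumD T T' (X \ Y.1))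
termination_by X.card
decreasing_by
  have hY := Y.2
  simp only [Finset.mem_filter, Finset.mem_powerset] at hY
  have h1 : Y.1.card ≤ X.card := Finset.card_le_card hY.1
  have h2 : 0 < Y.1.card := Finset.card_pos.mpr (Finset.nonempty_iff_ne_empty.mpr hY.2)
  rw [Finset.card_sdiff, Finset.inter_eq_left.mpr hY.1]
  omega

/-- The barred family `T̄'`, defined by `T̄'(∅) = 0` and
`(−1)^{|X|} T̄'(X) = Σ_{r=1}^{|X|} (−1)^r Σ Σ_{k=1}^{r} T(X₁)⋯T'(X_k)⋯T(X_r)`, the inner sum over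
ordered partitions of `X` into `r` nonempty pairwise disjoint blocks, with `T'` replacing `T`
in exactly one block. -/
def chronoBarD {A : Type*} [Ring A] {ι : Type*} [DecidableEq ι]
    (T T' : Finset ι → A) (X : Finset ι) : A :=
  (-1 : A) ^ X.card * opSumD T T' X

/-- The advanced sum `A′_n := Σ (−1)^{|Y|} T(X)·T̄(Y)`, over all partitions
`X ⊔ Y = {1,…,n}` with `n ∈ X` (here `lst` plays the role of the index `n`) and `Y ≠ ∅`. -/
def advP {A : Type*} [Ring A] {ι : Type*} [Fintype ι] [DecidableEq ι]
    (T : Finset ι → A) (lst : ι) : A :=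
  ∑ Y ∈ (Finset.univ.erase lst).powerset.filter (fun Y => Y ≠ ∅),
    (-1 : A) ^ Y.card * (T Yᶜ * chronoBar T Y)

/-- The retarded sum `R′_n := Σ (−1)^{|Y|} T̄(Y)·T(X)`, over all partitions
`X ⊔ Y = {1,…,n}` with `n ∈ X` (here `lst` plays the role of the index `n`) and `Y ≠ ∅`. -/
def retP {A : Type*} [Ring A] {ι : Type*} [Fintype ι] [DecidableEq ι]
    (T : Finset ι → A) (lst : ι) : A :=
  ∑ Y ∈ (Finset.univ.erase lst).powerset.filter (fun Y => Y ≠ ∅),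
    (-1 : A) ^ Y.card * (chronoBar T Y * T Yᶜ)

/-- The advanced sum `A′_{n,l} := Σ (−1)^{|Y|} [T'_l(X)·T̄(Y) + T(X)·T̄'_l(Y)]`, over all
partitions `X ⊔ Y = {1,…,n}` with `n ∈ X` (here `lst` plays the role of `n`) and `Y ≠ ∅`. -/
def advPD {A : Type*} [Ring A] {ι : Type*} [Fintype ι] [DecidableEq ι]
    (T T' : Finset ι → A) (lst : ι) : A :=
  ∑ Y ∈ (Finset.univ.erase lst).powerset.filter (fun Y => Y ≠ ∅),
    (-1 : A) ^ Y.card * (T' Yᶜ * chronoBar T Y + T Yᶜ * chronoBarD T T' Y)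

/-- The retarded sum `R′_{n,l} := Σ (−1)^{|Y|} [T̄'_l(Y)·T(X) + T̄(Y)·T'_l(X)]`, over all
partitions `X ⊔ Y = {1,…,n}` with `n ∈ X` (here `lst` plays the role of `n`) and `Y ≠ ∅`. -/
def retPD {A : Type*} [Ring A] {ι : Type*} [Fintype ι] [DecidableEq ι]
    (T T' : Finset ι → A) (lst : ι) : A :=
  ∑ Y ∈ (Finset.univ.erase lst).powerset.filter (fun Y => Y ≠ ∅),
    (-1 : A) ^ Y.card * (chronoBarD T T' Y * T Yᶜ + chronoBar T Y * T' Yᶜ)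
section Aux

open Finset

set_option linter.unusedSectionVars false

variable {n : ℕ} {A : Type*} [NormedRing A] [NormedAlgebra ℝ A]

private abbrev Pt (n : ℕ) := Fin n → Fin 4 → ℝ

private theorem cardInd {ι : Type*} (P : Finset ι → Prop)
    (h : ∀ X : Finset ι, (∀ Z : Finset ι, Z.card < X.card → P Z) → P X) (X : Finset ι) :
    P X := by
  have key : ∀ N, ∀ X : Finset ι, X.card < N → P X := by
    intro N
    induction N with
    | zero => intro X hX; omega
    | succ N ih => intro X hX; exact h X fun Z hZ => ih Z (by omega)
  exact key (X.card + 1) X (Nat.lt_succ_self _)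

private theorem mem_blocks {ι : Type*} [DecidableEq ι] {X Y : Finset ι}
    (h : Y ∈ X.powerset.filter (fun Y => Y ≠ ∅)) :
    Y ⊆ X ∧ Y ≠ ∅ ∧ (X \ Y).card < X.card := by
  simp only [Finset.mem_filter, Finset.mem_powerset] at h
  refine ⟨h.1, h.2, ?_⟩
  have h1 : Y.card ≤ X.card := Finset.card_le_card h.1
  have h2 : 0 < Y.card := Finset.card_pos.mpr (Finset.nonempty_iff_ne_empty.mpr h.2)
  rw [Finset.card_sdiff, Finset.inter_eq_left.mpr h.1]; omega

/-- directional derivative vanishes if function doesn't depend on coordinate l -/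
private theorem fderiv_single_zero {f : Pt n → A} {S : Finset (Fin n)}
    (hdep : ∀ p q : Pt n, (∀ i ∈ S, p i = q i) → f p = f q)
    (hf : Differentiable ℝ f) {l : Fin n} (hl : l ∉ S) (v : Fin 4 → ℝ) (p : Pt n) :
    fderiv ℝ f p (Pi.single l v) = 0 := by
  set w : Pt n := Pi.single l v with hw
  have hg : HasDerivAt (fun t : ℝ => p + t • w) w 0 := by
    simpa using ((hasDerivAt_id (0:ℝ)).smul_const w).const_add p
  have h1 : HasDerivAt (fun t : ℝ => f (p + t • w)) (fderiv ℝ f p w) 0 := by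
    have hF : HasFDerivAt f (fderiv ℝ f p) ((fun t : ℝ => p + t • w) 0) := by
      simpa using (hf p).hasFDerivAt
    exact hF.comp_hasDerivAt 0 hg
  have h2 : (fun t : ℝ => f (p + t • w)) = fun _ => f p := by
    funext t
    refine hdep _ _ fun i hi => ?_
    have hne : i ≠ l := fun h => hl (h ▸ hi)
    simp [hw, Pi.single_eq_of_ne hne]
  rw [h2] at h1
  exact h1.unique (hasDerivAt_const 0 (f p))

private theorem opSum_smooth (T : Finset (Fin n) → Pt n → A)
    (hT : ∀ S, ContDiff ℝ (⊤ : ℕ∞) (T S)) (X : Finset (Fin n)) : ContDiff ℝ (⊤ : ℕ∞) (opSum T X) := by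
  induction X using cardInd with
  | h X ih =>
    rw [opSum]
    split
    · exact contDiff_const
    · have heq : (∑ Y ∈ (X.powerset.filter (fun Y => Y ≠ ∅)).attach,
          (-1 : Pt n → A) * T Y.1 * opSum T (X \ Y.1)) =
          fun p => ∑ Y ∈ (X.powerset.filter (fun Y => Y ≠ ∅)).attach,
            -(T Y.1 p * opSum T (X \ Y.1) p) := by
        funext p; simp [Finset.sum_apply]
      rw [heq]
      exact ContDiff.sum fun Y _ =>
        (((hT Y.1).mul (ih _ (mem_blocks Y.2).2.2))).neg

private theorem opSum_apply (T : Finset (Fin n) → Pt n → A) {X : Finset (Fin n)}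
    (hX : X ≠ ∅) (p : Pt n) :
    opSum T X p = ∑ Y ∈ (X.powerset.filter (fun Y => Y ≠ ∅)).attach,
      -(T Y.1 p * opSum T (X \ Y.1) p) := by
  rw [opSum, dif_neg hX]
  simp [Finset.sum_apply]

private theorem opSumD_fun (T T' : Finset (Fin n) → Pt n → A) {X : Finset (Fin n)}
    (hX : X ≠ ∅) :
    opSumD T T' X = fun p => ∑ Y ∈ (X.powerset.filter (fun Y => Y ≠ ∅)).attach,
      -(T' Y.1 p * opSum T (X \ Y.1) p + T Y.1 p * opSumD T T' (X \ Y.1) p) := by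
  rw [opSumD, dif_neg hX]
  funext p
  simp [Finset.sum_apply]

private theorem opSum_dep (T : Finset (Fin n) → Pt n → A)
    (hTdep : ∀ S, ∀ p q : Pt n, (∀ i ∈ S, p i = q i) → T S p = T S q) (X : Finset (Fin n)) :
    ∀ p q : Pt n, (∀ i ∈ X, p i = q i) → opSum T X p = opSum T X q := by
  induction X using cardInd with
  | h X ih =>
    intro p q hpq
    by_cases hX : X = ∅
    · subst hX; rw [opSum]; simp
    · rw [opSum_apply T hX, opSum_apply T hX]
      refine Finset.sum_congr rfl fun Y _ => ?_
      obtain ⟨hsub, -, hcard⟩ := mem_blocks Y.2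
      rw [hTdep Y.1 p q fun i hi => hpq i (hsub hi),
        ih _ hcard p q fun i hi => hpq i ((Finset.sdiff_subset) hi)]

private theorem opSumD_smooth (T T' : Finset (Fin n) → Pt n → A)
    (hT : ∀ S, ContDiff ℝ (⊤ : ℕ∞) (T S)) (hT' : ∀ S, ContDiff ℝ (⊤ : ℕ∞) (T' S)) (X : Finset (Fin n)) :
    ContDiff ℝ (⊤ : ℕ∞) (opSumD T T' X) := by
  induction X using cardInd with
  | h X ih =>
    by_cases hX : X = ∅
    · subst hX; rw [opSumD]; exact contDiff_const (c := (0:A))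
    · rw [opSumD_fun T T' hX]
      exact ContDiff.sum fun Y _ =>
        (((hT' Y.1).mul (opSum_smooth T hT _)).add
          ((hT Y.1).mul (ih _ (mem_blocks Y.2).2.2))).neg

private theorem opSumD_dep (T T' : Finset (Fin n) → Pt n → A)
    (hTdep : ∀ S, ∀ p q : Pt n, (∀ i ∈ S, p i = q i) → T S p = T S q)
    (hT'dep : ∀ S, ∀ p q : Pt n, (∀ i ∈ S, p i = q i) → T' S p = T' S q) (X : Finset (Fin n)) :
    ∀ p q : Pt n, (∀ i ∈ X, p i = q i) → opSumD T T' X p = opSumD T T' X q := by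
  induction X using cardInd with
  | h X ih =>
    intro p q hpq
    by_cases hX : X = ∅
    · subst hX; rw [opSumD]; simp
    · rw [opSumD_fun T T' hX]
      refine Finset.sum_congr rfl fun Y _ => ?_
      obtain ⟨hsub, -, hcard⟩ := mem_blocks Y.2
      rw [hTdep Y.1 p q fun i hi => hpq i (hsub hi),
        hT'dep Y.1 p q fun i hi => hpq i (hsub hi),
        opSum_dep T hTdep _ p q fun i hi => hpq i ((Finset.sdiff_subset) hi),
        ih _ hcard p q fun i hi => hpq i ((Finset.sdiff_subset) hi)]

private theorem opSumD_vanish (T T' : Finset (Fin n) → Pt n → A) (X : Finset (Fin n))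
    (h0 : ∀ B : Finset (Fin n), B ⊆ X → T' B = 0) : opSumD T T' X = 0 := by
  induction X using cardInd with
  | h X ih =>
    by_cases hX : X = ∅
    · subst hX; rw [opSumD]; simp
    · rw [opSumD_fun T T' hX]
      funext p
      refine Finset.sum_eq_zero fun Y _ => ?_
      obtain ⟨hsub, -, hcard⟩ := mem_blocks Y.2
      rw [h0 Y.1 hsub, ih _ hcard fun B hB => h0 B (hB.trans (Finset.sdiff_subset))]
      simp

private theorem fderiv_mul_apply' {f g : Pt n → A} {p : Pt n}
    (hf : DifferentiableAt ℝ f p) (hg : DifferentiableAt ℝ g p) (v : Pt n) :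
    fderiv ℝ (fun x => f x * g x) p v = fderiv ℝ f p v * g p + f p * fderiv ℝ g p v := by
  rw [show (fun x => f x * g x) = f * g from rfl, (hf.hasFDerivAt.mul' hg.hasFDerivAt).fderiv]
  simp only [ContinuousLinearMap.add_apply, ContinuousLinearMap.smul_apply,
    ContinuousLinearMap.smulRight_apply, smul_eq_mul, op_smul_eq_mul]
  exact add_comm _ _

private theorem sum_swap3 {α β γ M : Type*} [AddCommMonoid M] (s : Finset α) (t : Finset β)
    (u : Finset γ) (f : α → β → γ → M) :
    ∑ a ∈ s, ∑ b ∈ t, ∑ c ∈ u, f a b c = ∑ c ∈ u, ∑ a ∈ s, ∑ b ∈ t, f a b c := by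
  calc ∑ a ∈ s, ∑ b ∈ t, ∑ c ∈ u, f a b c
      = ∑ a ∈ s, ∑ c ∈ u, ∑ b ∈ t, f a b c :=
        Finset.sum_congr rfl fun a _ => Finset.sum_comm
    _ = ∑ c ∈ u, ∑ a ∈ s, ∑ b ∈ t, f a b c := Finset.sum_comm

private theorem fderiv_zero_fun (p v : Pt n) : fderiv ℝ (0 : Pt n → A) p v = 0 := by
  rw [show (0 : Pt n → A) = (fun _ => (0:A)) from rfl, fderiv_const_apply]; rfl

private theorem fderiv_comb {f g h k : Pt n → A} {q : Pt n} (w : Pt n)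
    (hf : DifferentiableAt ℝ f q) (hg : DifferentiableAt ℝ g q)
    (hh : DifferentiableAt ℝ h q) (hk : DifferentiableAt ℝ k q) :
    fderiv ℝ (fun x => -(f x * g x + h x * k x)) q w =
      -((fderiv ℝ f q w * g q + f q * fderiv ℝ g q w)
        + (fderiv ℝ h q w * k q + h q * fderiv ℝ k q w)) := by
  rw [fderiv_fun_neg, ContinuousLinearMap.neg_apply,
    fderiv_fun_add (by exact hf.mul hg) (by exact hh.mul hk), ContinuousLinearMap.add_apply,
    fderiv_mul_apply' hf hg, fderiv_mul_apply' hh hk]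

end Aux

section Main

open Finset

set_option linter.unusedSectionVars false

variable {n : ℕ} {A : Type*} [NormedRing A] [NormedAlgebra ℂ A]

variable (Q : A) (T : Finset (Fin n) → Pt n → A)
  (Tmu : Fin n → Fin 4 → Finset (Fin n) → Pt n → A)
  (hTsmooth : ∀ S, ContDiff ℝ (⊤ : ℕ∞) (T S))
  (hTdep : ∀ S, ∀ p q : Pt n, (∀ i ∈ S, p i = q i) → T S p = T S q)
  (hTmu0 : ∀ l μ S, l ∉ S → Tmu l μ S = 0)
  (hTmusmooth : ∀ l μ S, ContDiff ℝ (⊤ : ℕ∞) (Tmu l μ S))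
  (hTmudep : ∀ l μ S, ∀ p q : Pt n,
      (∀ i ∈ S, p i = q i) → Tmu l μ S p = Tmu l μ S q)
  (hgauge : ∀ S : Finset (Fin n), S ≠ Finset.univ → ∀ p : Pt n,
      Q * T S p - T S p * Q =
        Complex.I • ∑ l ∈ S, ∑ μ : Fin 4,
          fderiv ℝ (Tmu l μ S) p (Pi.single l (Pi.single μ (1 : ℝ))))

private theorem neg_one_pow_cancel (c : ℕ) (b : A) : (-1:A)^c * ((-1:A)^c * b) = b := by
  rw [← mul_assoc, ← pow_add, Even.neg_one_pow ⟨c, rfl⟩, one_mul]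

private theorem neg_one_pow_mid (c : ℕ) (a b : A) : (-1:A)^c * (a * ((-1:A)^c * b)) = a * b := by
  rw [← mul_assoc, ((Commute.neg_one_left a).pow_left c).eq, mul_assoc, neg_one_pow_cancel]

private theorem advP_apply (lst : Fin n) (p : Pt n) :
    advP T lst p = ∑ Y ∈ (Finset.univ.erase lst).powerset.filter (fun Y => Y ≠ ∅),
      T Yᶜ p * opSum T Y p := by
  rw [advP]
  simp only [Finset.sum_apply, Pi.mul_apply, Pi.pow_apply, Pi.neg_apply, Pi.one_apply,
    chronoBar]
  exact Finset.sum_congr rfl fun Y _ => neg_one_pow_mid _ _ _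

private theorem retP_apply (lst : Fin n) (p : Pt n) :
    retP T lst p = ∑ Y ∈ (Finset.univ.erase lst).powerset.filter (fun Y => Y ≠ ∅),
      opSum T Y p * T Yᶜ p := by
  rw [retP]
  simp only [Finset.sum_apply, Pi.mul_apply, Pi.pow_apply, Pi.neg_apply, Pi.one_apply,
    chronoBar]
  refine Finset.sum_congr rfl fun Y _ => ?_
  rw [← mul_assoc, ← mul_assoc, ← pow_add, Even.neg_one_pow ⟨Y.card, rfl⟩, one_mul]

private theorem advPD_fun (T' : Finset (Fin n) → Pt n → A) (lst : Fin n) :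
    advPD T T' lst = fun p => ∑ Y ∈ (Finset.univ.erase lst).powerset.filter (fun Y => Y ≠ ∅),
      (T' Yᶜ p * opSum T Y p + T Yᶜ p * opSumD T T' Y p) := by
  funext p
  rw [advPD]
  simp only [Finset.sum_apply, Pi.mul_apply, Pi.add_apply, Pi.pow_apply, Pi.neg_apply,
    Pi.one_apply, chronoBar, chronoBarD]
  refine Finset.sum_congr rfl fun Y _ => ?_
  rw [mul_add, neg_one_pow_mid, neg_one_pow_mid]

private theorem retPD_fun (T' : Finset (Fin n) → Pt n → A) (lst : Fin n) :
    retPD T T' lst = fun p => ∑ Y ∈ (Finset.univ.erase lst).powerset.filter (fun Y => Y ≠ ∅),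
      (opSumD T T' Y p * T Yᶜ p + opSum T Y p * T' Yᶜ p) := by
  funext p
  rw [retPD]
  simp only [Finset.sum_apply, Pi.mul_apply, Pi.add_apply, Pi.pow_apply, Pi.neg_apply,
    Pi.one_apply, chronoBar, chronoBarD]
  refine Finset.sum_congr rfl fun Y _ => ?_
  rw [mul_add, ← mul_assoc, ← mul_assoc, ← mul_assoc, ← mul_assoc, ← pow_add,
    Even.neg_one_pow ⟨Y.card, rfl⟩, one_mul, one_mul]

private theorem fderiv_comb' {f g h k : Pt n → A} {q : Pt n} (w : Pt n)
    (hf : DifferentiableAt ℝ f q) (hg : DifferentiableAt ℝ g q)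
    (hh : DifferentiableAt ℝ h q) (hk : DifferentiableAt ℝ k q) :
    fderiv ℝ (fun x => f x * g x + h x * k x) q w =
      (fderiv ℝ f q w * g q + f q * fderiv ℝ g q w)
        + (fderiv ℝ h q w * k q + h q * fderiv ℝ k q w) := by
  rw [fderiv_fun_add (by exact hf.mul hg) (by exact hh.mul hk), ContinuousLinearMap.add_apply,
    fderiv_mul_apply' hf hg, fderiv_mul_apply' hh hk]

private theorem advPD_smooth (T' : Finset (Fin n) → Pt n → A)
    (hT : ∀ S, ContDiff ℝ (⊤ : ℕ∞) (T S)) (hT' : ∀ S, ContDiff ℝ (⊤ : ℕ∞) (T' S)) (lst : Fin n) :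
    ContDiff ℝ (⊤ : ℕ∞) (advPD T T' lst) := by
  rw [advPD_fun T T' lst]
  exact ContDiff.sum fun Y _ =>
    ((hT' Yᶜ).mul (opSum_smooth T hT Y)).add ((hT Yᶜ).mul (opSumD_smooth T T' hT hT' Y))

private theorem retPD_smooth (T' : Finset (Fin n) → Pt n → A)
    (hT : ∀ S, ContDiff ℝ (⊤ : ℕ∞) (T S)) (hT' : ∀ S, ContDiff ℝ (⊤ : ℕ∞) (T' S)) (lst : Fin n) :
    ContDiff ℝ (⊤ : ℕ∞) (retPD T T' lst) := by
  rw [retPD_fun T T' lst]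
  exact ContDiff.sum fun Y _ =>
    ((opSumD_smooth T T' hT hT' Y).mul (hT Yᶜ)).add ((opSum_smooth T hT Y).mul (hT' Yᶜ))


include hTsmooth hTdep hTmu0 hTmusmooth hTmudep hgauge

private theorem hgauge' (S : Finset (Fin n)) (hS : S ≠ Finset.univ) (p : Pt n) :
    Q * T S p - T S p * Q =
      Complex.I • ∑ l : Fin n, ∑ μ : Fin 4,
        fderiv ℝ (Tmu l μ S) p (Pi.single l (Pi.single μ (1 : ℝ))) := by
  rw [hgauge S hS p]
  congr 1
  refine Finset.sum_subset (Finset.subset_univ S) fun l _ hl => ?_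
  refine Finset.sum_eq_zero fun μ _ => ?_
  rw [hTmu0 l μ S hl, fderiv_zero_fun]

private theorem opSum_comm : ∀ X : Finset (Fin n), X ≠ Finset.univ → ∀ p : Pt n,
    Q * opSum T X p - opSum T X p * Q =
      Complex.I • ∑ l : Fin n, ∑ μ : Fin 4,
        fderiv ℝ (opSumD T (Tmu l μ) X) p (Pi.single l (Pi.single μ (1 : ℝ))) := by
  have hTd : ∀ S (q : Pt n), DifferentiableAt ℝ (T S) q := fun S q =>
    ((hTsmooth S).differentiable (by simp)).differentiableAt
  have hTmud : ∀ l μ S (q : Pt n), DifferentiableAt ℝ (Tmu l μ S) q := fun l μ S q =>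
    ((hTmusmooth l μ S).differentiable (by simp)).differentiableAt
  have hoSd : ∀ Z (q : Pt n), DifferentiableAt ℝ (opSum T Z) q := fun Z q =>
    ((opSum_smooth T hTsmooth Z).differentiable (by simp)).differentiableAt
  have hoDd : ∀ l μ Z (q : Pt n), DifferentiableAt ℝ (opSumD T (Tmu l μ) Z) q := fun l μ Z q =>
    ((opSumD_smooth T (Tmu l μ) hTsmooth (hTmusmooth l μ) Z).differentiable (by simp)).differentiableAt
  intro X
  induction X using cardInd with
  | h X ih =>
    intro hX p
    by_cases hXe : X = ∅
    · subst hXe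
      have h1 : opSum T (∅ : Finset (Fin n)) = 1 := by rw [opSum]; simp
      have h2 : ∀ l μ, opSumD T (Tmu l μ) (∅ : Finset (Fin n)) = 0 := fun l μ => by
        rw [opSumD]; simp
      simp [h1, h2, fderiv_zero_fun]
    · -- expansion of the derivative of opSumD, with cross terms killed
      have key : ∀ l μ, fderiv ℝ (opSumD T (Tmu l μ) X) p (Pi.single l (Pi.single μ (1:ℝ)))
          = ∑ Y ∈ (X.powerset.filter (fun Y => Y ≠ ∅)).attach,
              -(fderiv ℝ (Tmu l μ Y.1) p (Pi.single l (Pi.single μ (1:ℝ))) * opSum T (X \ Y.1) p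
                + T Y.1 p * fderiv ℝ (opSumD T (Tmu l μ) (X \ Y.1)) p
                    (Pi.single l (Pi.single μ (1:ℝ)))) := by
        intro l μ
        rw [opSumD_fun T (Tmu l μ) hXe, fderiv_fun_sum (fun Y _ =>
          ((((hTmud l μ Y.1 p).mul (hoSd _ p)).add ((hTd Y.1 p).mul (hoDd l μ _ p))).neg)),
          ContinuousLinearMap.sum_apply]
        refine Finset.sum_congr rfl fun Y _ => ?_
        obtain ⟨hsub, hne, hcard⟩ := mem_blocks Y.2
        rw [fderiv_comb _ (hTmud l μ Y.1 p) (hoSd _ p) (hTd Y.1 p) (hoDd l μ _ p)]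
        by_cases hl : l ∈ Y.1
        · have hl2 : l ∉ X \ Y.1 := fun h => (Finset.mem_sdiff.mp h).2 hl
          have c1 : fderiv ℝ (opSum T (X \ Y.1)) p (Pi.single l (Pi.single μ (1:ℝ))) = 0 :=
            fderiv_single_zero (opSum_dep T hTdep _) ((opSum_smooth T hTsmooth _).differentiable (by simp)) hl2 _ p
          have c2 : opSumD T (Tmu l μ) (X \ Y.1) = 0 :=
            opSumD_vanish T _ _ fun B hB => hTmu0 l μ B (fun h => hl2 (hB h))
          rw [c1, c2]
          simp
        · have c1 : Tmu l μ Y.1 = 0 := hTmu0 l μ Y.1 hl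
          have c2 : fderiv ℝ (T Y.1) p (Pi.single l (Pi.single μ (1:ℝ))) = 0 :=
            fderiv_single_zero (hTdep Y.1) ((hTsmooth Y.1).differentiable (by simp)) hl _ p
          rw [c1, c2]
          simp
      -- swap the sums on the right-hand side
      have hswap : ∑ l : Fin n, ∑ μ : Fin 4,
            fderiv ℝ (opSumD T (Tmu l μ) X) p (Pi.single l (Pi.single μ (1:ℝ)))
          = ∑ Y ∈ (X.powerset.filter (fun Y => Y ≠ ∅)).attach, ∑ l : Fin n, ∑ μ : Fin 4,
              -(fderiv ℝ (Tmu l μ Y.1) p (Pi.single l (Pi.single μ (1:ℝ))) * opSum T (X \ Y.1) p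
                + T Y.1 p * fderiv ℝ (opSumD T (Tmu l μ) (X \ Y.1)) p
                    (Pi.single l (Pi.single μ (1:ℝ)))) := by
        simp_rw [key]
        exact sum_swap3 _ _ _ _
      -- expand the left-hand side
      have hLHS : Q * opSum T X p - opSum T X p * Q
          = ∑ Y ∈ (X.powerset.filter (fun Y => Y ≠ ∅)).attach,
              -((Q * T Y.1 p - T Y.1 p * Q) * opSum T (X \ Y.1) p
                + T Y.1 p * (Q * opSum T (X \ Y.1) p - opSum T (X \ Y.1) p * Q)) := by
        rw [opSum_apply T hXe p, Finset.mul_sum, Finset.sum_mul, ← Finset.sum_sub_distrib]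
        refine Finset.sum_congr rfl fun Y _ => ?_
        noncomm_ring
      rw [hLHS, hswap, Finset.smul_sum]
      refine Finset.sum_congr rfl fun Y _ => ?_
      obtain ⟨hsub, hne, hcard⟩ := mem_blocks Y.2
      have hYu : Y.1 ≠ Finset.univ := fun h => hX (Finset.univ_subset_iff.mp (h ▸ hsub))
      have hXYu : X \ Y.1 ≠ Finset.univ := fun h =>
        hX (Finset.univ_subset_iff.mp (h ▸ Finset.sdiff_subset))
      rw [hgauge' Q T Tmu hTsmooth hTdep hTmu0 hTmusmooth hTmudep hgauge Y.1 hYu p,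
        ih _ hcard hXYu p]
      simp only [neg_add, Finset.sum_add_distrib, Finset.sum_neg_distrib,
        ← Finset.sum_mul, ← Finset.mul_sum, smul_add, smul_neg, smul_mul_assoc,
        mul_smul_comm]

private theorem advP_comm (lst : Fin n) (p : Pt n) :
    Q * advP T lst p - advP T lst p * Q =
      Complex.I • ∑ l : Fin n, ∑ μ : Fin 4,
        fderiv ℝ (advPD T (Tmu l μ) lst) p (Pi.single l (Pi.single μ (1:ℝ))) := by
  have hTd : ∀ S (q : Pt n), DifferentiableAt ℝ (T S) q := fun S q =>
    ((hTsmooth S).differentiable (by simp)).differentiableAt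
  have hTmud : ∀ l μ S (q : Pt n), DifferentiableAt ℝ (Tmu l μ S) q := fun l μ S q =>
    ((hTmusmooth l μ S).differentiable (by simp)).differentiableAt
  have hoSd : ∀ Z (q : Pt n), DifferentiableAt ℝ (opSum T Z) q := fun Z q =>
    ((opSum_smooth T hTsmooth Z).differentiable (by simp)).differentiableAt
  have hoDd : ∀ l μ Z (q : Pt n), DifferentiableAt ℝ (opSumD T (Tmu l μ) Z) q := fun l μ Z q =>
    ((opSumD_smooth T (Tmu l μ) hTsmooth (hTmusmooth l μ) Z).differentiable (by simp)).differentiableAt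
  have key : ∀ l μ, fderiv ℝ (advPD T (Tmu l μ) lst) p (Pi.single l (Pi.single μ (1:ℝ)))
      = ∑ Y ∈ (Finset.univ.erase lst).powerset.filter (fun Y => Y ≠ ∅),
          (fderiv ℝ (Tmu l μ Yᶜ) p (Pi.single l (Pi.single μ (1:ℝ))) * opSum T Y p
            + T Yᶜ p * fderiv ℝ (opSumD T (Tmu l μ) Y) p (Pi.single l (Pi.single μ (1:ℝ)))) := by
    intro l μ
    rw [advPD_fun T (Tmu l μ) lst, fderiv_fun_sum (A := fun Y q =>
      Tmu l μ Yᶜ q * opSum T Y q + T Yᶜ q * opSumD T (Tmu l μ) Y q) (fun Y _ =>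
      ((hTmud l μ Yᶜ p).mul (hoSd Y p)).add ((hTd Yᶜ p).mul (hoDd l μ Y p))),
      ContinuousLinearMap.sum_apply]
    refine Finset.sum_congr rfl fun Y hY => ?_
    rw [fderiv_comb' _ (hTmud l μ Yᶜ p) (hoSd Y p) (hTd Yᶜ p) (hoDd l μ Y p)]
    by_cases hl : l ∈ Y
    · have hlc : l ∉ Yᶜ := by simp [hl]
      have c1 : Tmu l μ Yᶜ = 0 := hTmu0 l μ Yᶜ hlc
      have c2 : fderiv ℝ (T Yᶜ) p (Pi.single l (Pi.single μ (1:ℝ))) = 0 :=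
        fderiv_single_zero (hTdep Yᶜ) ((hTsmooth Yᶜ).differentiable (by simp)) hlc _ p
      rw [c1, c2]
      simp
    · have c1 : fderiv ℝ (opSum T Y) p (Pi.single l (Pi.single μ (1:ℝ))) = 0 :=
        fderiv_single_zero (opSum_dep T hTdep Y)
          ((opSum_smooth T hTsmooth Y).differentiable (by simp)) hl _ p
      have c2 : opSumD T (Tmu l μ) Y = 0 :=
        opSumD_vanish T _ _ fun B hB => hTmu0 l μ B (fun h => hl (hB h))
      rw [c1, c2]
      simp
  have hswap : ∑ l : Fin n, ∑ μ : Fin 4,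
        fderiv ℝ (advPD T (Tmu l μ) lst) p (Pi.single l (Pi.single μ (1:ℝ)))
      = ∑ Y ∈ (Finset.univ.erase lst).powerset.filter (fun Y => Y ≠ ∅),
          ∑ l : Fin n, ∑ μ : Fin 4,
            (fderiv ℝ (Tmu l μ Yᶜ) p (Pi.single l (Pi.single μ (1:ℝ))) * opSum T Y p
              + T Yᶜ p * fderiv ℝ (opSumD T (Tmu l μ) Y) p (Pi.single l (Pi.single μ (1:ℝ)))) := by
    simp_rw [key]
    exact sum_swap3 _ _ _ _
  have hLHS : Q * advP T lst p - advP T lst p * Q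
      = ∑ Y ∈ (Finset.univ.erase lst).powerset.filter (fun Y => Y ≠ ∅),
          ((Q * T Yᶜ p - T Yᶜ p * Q) * opSum T Y p
            + T Yᶜ p * (Q * opSum T Y p - opSum T Y p * Q)) := by
    rw [advP_apply T lst p, Finset.mul_sum, Finset.sum_mul, ← Finset.sum_sub_distrib]
    exact Finset.sum_congr rfl fun Y _ => by noncomm_ring
  rw [hLHS, hswap, Finset.smul_sum]
  refine Finset.sum_congr rfl fun Y hY => ?_
  have hY' := Finset.mem_filter.mp hY
  have hYsub := Finset.mem_powerset.mp hY'.1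
  have hYu : Y ≠ Finset.univ := fun h => by
    subst h
    exact (Finset.mem_erase.mp (hYsub (Finset.mem_univ lst))).1 rfl
  have hYcu : Yᶜ ≠ Finset.univ := fun h => hY'.2 ((Finset.compl_eq_univ_iff Y).mp h)
  rw [hgauge' Q T Tmu hTsmooth hTdep hTmu0 hTmusmooth hTmudep hgauge Yᶜ hYcu p,
    opSum_comm Q T Tmu hTsmooth hTdep hTmu0 hTmusmooth hTmudep hgauge Y hYu p]
  simp only [Finset.sum_add_distrib, ← Finset.sum_mul, ← Finset.mul_sum, smul_add,
    smul_mul_assoc, mul_smul_comm]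

private theorem retP_comm (lst : Fin n) (p : Pt n) :
    Q * retP T lst p - retP T lst p * Q =
      Complex.I • ∑ l : Fin n, ∑ μ : Fin 4,
        fderiv ℝ (retPD T (Tmu l μ) lst) p (Pi.single l (Pi.single μ (1:ℝ))) := by
  have hTd : ∀ S (q : Pt n), DifferentiableAt ℝ (T S) q := fun S q =>
    ((hTsmooth S).differentiable (by simp)).differentiableAt
  have hTmud : ∀ l μ S (q : Pt n), DifferentiableAt ℝ (Tmu l μ S) q := fun l μ S q =>
    ((hTmusmooth l μ S).differentiable (by simp)).differentiableAt
  have hoSd : ∀ Z (q : Pt n), DifferentiableAt ℝ (opSum T Z) q := fun Z q =>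
    ((opSum_smooth T hTsmooth Z).differentiable (by simp)).differentiableAt
  have hoDd : ∀ l μ Z (q : Pt n), DifferentiableAt ℝ (opSumD T (Tmu l μ) Z) q := fun l μ Z q =>
    ((opSumD_smooth T (Tmu l μ) hTsmooth (hTmusmooth l μ) Z).differentiable (by simp)).differentiableAt
  have key : ∀ l μ, fderiv ℝ (retPD T (Tmu l μ) lst) p (Pi.single l (Pi.single μ (1:ℝ)))
      = ∑ Y ∈ (Finset.univ.erase lst).powerset.filter (fun Y => Y ≠ ∅),
          (fderiv ℝ (opSumD T (Tmu l μ) Y) p (Pi.single l (Pi.single μ (1:ℝ))) * T Yᶜ p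
            + opSum T Y p * fderiv ℝ (Tmu l μ Yᶜ) p (Pi.single l (Pi.single μ (1:ℝ)))) := by
    intro l μ
    rw [retPD_fun T (Tmu l μ) lst, fderiv_fun_sum (A := fun Y q =>
      opSumD T (Tmu l μ) Y q * T Yᶜ q + opSum T Y q * Tmu l μ Yᶜ q) (fun Y _ =>
      ((hoDd l μ Y p).mul (hTd Yᶜ p)).add ((hoSd Y p).mul (hTmud l μ Yᶜ p))),
      ContinuousLinearMap.sum_apply]
    refine Finset.sum_congr rfl fun Y hY => ?_
    rw [fderiv_comb' _ (hoDd l μ Y p) (hTd Yᶜ p) (hoSd Y p) (hTmud l μ Yᶜ p)]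
    by_cases hl : l ∈ Y
    · have hlc : l ∉ Yᶜ := by simp [hl]
      have c1 : Tmu l μ Yᶜ = 0 := hTmu0 l μ Yᶜ hlc
      have c2 : fderiv ℝ (T Yᶜ) p (Pi.single l (Pi.single μ (1:ℝ))) = 0 :=
        fderiv_single_zero (hTdep Yᶜ) ((hTsmooth Yᶜ).differentiable (by simp)) hlc _ p
      rw [c1, c2]
      simp
    · have c1 : fderiv ℝ (opSum T Y) p (Pi.single l (Pi.single μ (1:ℝ))) = 0 :=
        fderiv_single_zero (opSum_dep T hTdep Y)
          ((opSum_smooth T hTsmooth Y).differentiable (by simp)) hl _ p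
      have c2 : opSumD T (Tmu l μ) Y = 0 :=
        opSumD_vanish T _ _ fun B hB => hTmu0 l μ B (fun h => hl (hB h))
      rw [c1, c2]
      simp
  have hswap : ∑ l : Fin n, ∑ μ : Fin 4,
        fderiv ℝ (retPD T (Tmu l μ) lst) p (Pi.single l (Pi.single μ (1:ℝ)))
      = ∑ Y ∈ (Finset.univ.erase lst).powerset.filter (fun Y => Y ≠ ∅),
          ∑ l : Fin n, ∑ μ : Fin 4,
            (fderiv ℝ (opSumD T (Tmu l μ) Y) p (Pi.single l (Pi.single μ (1:ℝ))) * T Yᶜ p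
              + opSum T Y p * fderiv ℝ (Tmu l μ Yᶜ) p (Pi.single l (Pi.single μ (1:ℝ)))) := by
    simp_rw [key]
    exact sum_swap3 _ _ _ _
  have hLHS : Q * retP T lst p - retP T lst p * Q
      = ∑ Y ∈ (Finset.univ.erase lst).powerset.filter (fun Y => Y ≠ ∅),
          ((Q * opSum T Y p - opSum T Y p * Q) * T Yᶜ p
            + opSum T Y p * (Q * T Yᶜ p - T Yᶜ p * Q)) := by
    rw [retP_apply T lst p, Finset.mul_sum, Finset.sum_mul, ← Finset.sum_sub_distrib]
    exact Finset.sum_congr rfl fun Y _ => by noncomm_ring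
  rw [hLHS, hswap, Finset.smul_sum]
  refine Finset.sum_congr rfl fun Y hY => ?_
  have hY' := Finset.mem_filter.mp hY
  have hYsub := Finset.mem_powerset.mp hY'.1
  have hYu : Y ≠ Finset.univ := fun h => by
    subst h
    exact (Finset.mem_erase.mp (hYsub (Finset.mem_univ lst))).1 rfl
  have hYcu : Yᶜ ≠ Finset.univ := fun h => hY'.2 ((Finset.compl_eq_univ_iff Y).mp h)
  rw [hgauge' Q T Tmu hTsmooth hTdep hTmu0 hTmusmooth hTmudep hgauge Yᶜ hYcu p,
    opSum_comm Q T Tmu hTsmooth hTdep hTmu0 hTmusmooth hTmudep hgauge Y hYu p]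
  simp only [Finset.sum_add_distrib, ← Finset.sum_mul, ← Finset.mul_sum, smul_add,
    smul_mul_assoc, mul_smul_comm]

private theorem subP_comm (lst : Fin n) (p : Pt n) :
    Q * (advP T lst - retP T lst) p - (advP T lst - retP T lst) p * Q =
      Complex.I • ∑ l : Fin n, ∑ μ : Fin 4,
        fderiv ℝ (advPD T (Tmu l μ) lst - retPD T (Tmu l μ) lst) p
          (Pi.single l (Pi.single μ (1:ℝ))) := by
  have hsub : ∀ (l : Fin n) (μ : Fin 4),
      fderiv ℝ (advPD T (Tmu l μ) lst - retPD T (Tmu l μ) lst) p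
        (Pi.single l (Pi.single μ (1:ℝ)))
      = fderiv ℝ (advPD T (Tmu l μ) lst) p (Pi.single l (Pi.single μ (1:ℝ)))
        - fderiv ℝ (retPD T (Tmu l μ) lst) p (Pi.single l (Pi.single μ (1:ℝ))) := by
    intro l μ
    have h : (advPD T (Tmu l μ) lst - retPD T (Tmu l μ) lst)
        = fun q => advPD T (Tmu l μ) lst q - retPD T (Tmu l μ) lst q := rfl
    rw [h, fderiv_fun_sub
      (((advPD_smooth T (Tmu l μ) hTsmooth (hTmusmooth l μ) lst).differentiable
        (by simp)).differentiableAt)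
      (((retPD_smooth T (Tmu l μ) hTsmooth (hTmusmooth l μ) lst).differentiable
        (by simp)).differentiableAt),
      ContinuousLinearMap.sub_apply]
  simp only [Pi.sub_apply, hsub, Finset.sum_sub_distrib, smul_sub]
  rw [← advP_comm Q T Tmu hTsmooth hTdep hTmu0 hTmusmooth hTmudep hgauge lst p,
    ← retP_comm Q T Tmu hTsmooth hTdep hTmu0 hTmusmooth hTmudep hgauge lst p]
  noncomm_ring

end Main


/-- If the gauge-invariance identity `[Q, T(S)] = i Σ_{l∈S} Σ_μ ∂T^μ_l(S)/∂x_l^μ` holds for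
every proper subset `S ⊊ {1,…,n}`, then pointwise on `(ℝ⁴)ⁿ`:
`[Q, A′_n] = i Σ_{l=1}^{n} Σ_μ ∂A′^μ_{n,l}/∂x_l^μ`, `[Q, R′_n] = i Σ_l Σ_μ ∂R′^μ_{n,l}/∂x_l^μ`,
and consequently `D_n := A′_n − R′_n` satisfies
`[Q, D_n] = i Σ_l Σ_μ ∂D^μ_{n,l}/∂x_l^μ` with `D^μ_{n,l} := A′^μ_{n,l} − R′^μ_{n,l}`. -/
theorem adv_ret_gauge_invariance {A : Type*} [NormedRing A] [NormedAlgebra ℂ A]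
    [CompleteSpace A] (n : ℕ) (hn : 0 < n) (Q : A)
    (T : Finset (Fin n) → (Fin n → Fin 4 → ℝ) → A)
    (Tmu : Fin n → Fin 4 → Finset (Fin n) → (Fin n → Fin 4 → ℝ) → A)
    (hT1 : T ∅ = 1)
    (hTsmooth : ∀ S, ContDiff ℝ (⊤ : ℕ∞) (T S))
    (hTdep : ∀ S, ∀ p q : Fin n → Fin 4 → ℝ, (∀ i ∈ S, p i = q i) → T S p = T S q)
    (hTmu0 : ∀ l μ S, l ∉ S → Tmu l μ S = 0)
    (hTmusmooth : ∀ l μ S, ContDiff ℝ (⊤ : ℕ∞) (Tmu l μ S))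
    (hTmudep : ∀ l μ S, ∀ p q : Fin n → Fin 4 → ℝ,
      (∀ i ∈ S, p i = q i) → Tmu l μ S p = Tmu l μ S q)
    (hgauge : ∀ S : Finset (Fin n), S ≠ Finset.univ → ∀ p : Fin n → Fin 4 → ℝ,
      Q * T S p - T S p * Q =
        Complex.I • ∑ l ∈ S, ∑ μ : Fin 4,
          fderiv ℝ (Tmu l μ S) p (Pi.single l (Pi.single μ (1 : ℝ)))) :
    (∀ p : Fin n → Fin 4 → ℝ,
      Q * advP T ⟨n - 1, by omega⟩ p - advP T ⟨n - 1, by omega⟩ p * Q =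
        Complex.I • ∑ l : Fin n, ∑ μ : Fin 4,
          fderiv ℝ (advPD T (Tmu l μ) ⟨n - 1, by omega⟩) p
            (Pi.single l (Pi.single μ (1 : ℝ)))) ∧
    (∀ p : Fin n → Fin 4 → ℝ,
      Q * retP T ⟨n - 1, by omega⟩ p - retP T ⟨n - 1, by omega⟩ p * Q =
        Complex.I • ∑ l : Fin n, ∑ μ : Fin 4,
          fderiv ℝ (retPD T (Tmu l μ) ⟨n - 1, by omega⟩) p
            (Pi.single l (Pi.single μ (1 : ℝ)))) ∧
    (∀ p : Fin n → Fin 4 → ℝ,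
      Q * (advP T ⟨n - 1, by omega⟩ - retP T ⟨n - 1, by omega⟩) p -
          (advP T ⟨n - 1, by omega⟩ - retP T ⟨n - 1, by omega⟩) p * Q =
        Complex.I • ∑ l : Fin n, ∑ μ : Fin 4,
          fderiv ℝ
            (advPD T (Tmu l μ) ⟨n - 1, by omega⟩ - retPD T (Tmu l μ) ⟨n - 1, by omega⟩) p
            (Pi.single l (Pi.single μ (1 : ℝ)))) := by
  exact ⟨fun p => advP_comm Q T Tmu hTsmooth hTdep hTmu0 hTmusmooth hTmudep hgauge _ p,
    fun p => retP_comm Q T Tmu hTsmooth hTdep hTmu0 hTmusmooth hTmudep hgauge _ p,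
    fun p => subP_comm Q T Tmu hTsmooth hTdep hTmu0 hTmusmooth hTmudep hgauge _ p⟩
end
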